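/- Let d ≥ 1 and let S be a linear subspace of the symmetric subspace Sym²(ℂ^d) ⊂ ℂ^d ⊗ ℂ^d, with P_S the orthogonal projection of Sym²(ℂ^d) onto S. Suppose that (1) for every nonzero v ∈ ℂ^d, P_S(v ⊗ v) ≠ 0 (i.e., S^⊥ contains no bosonic product state), and (2) no nonzero element of S can be written in the form x ⊗ x + y ⊗ y with x, y ∈ ℂ^d (i.e., every nonzero ψ ∈ S has rank at least 3). Then the Householder reflection U = I − 2·P_S satisfies: for every nonzero v ∈ ℂ^d and every w ∈ ℂ^d, U(v ⊗ v) ≠ w ⊗ w; that is, U is a bosonic universal entangler. -/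

import Mathlib

/-- (Re-registration of the standard instance, with high priority, to speed up
instance resolution.) -/
noncomputable instance (priority := 10000) euclideanInnerInst (n : Type*) [Fintype n] :
    InnerProductSpace ℂ (EuclideanSpace ℂ n) := by infer_instance

/-- The tensor product `v ⊗ w` of two vectors of `ℂ^n`, realized inside
`ℂ^n ⊗ ℂ^n ≅ ℂ^(n × n)` (with the induced inner product). -/
noncomputable def tp {n : Type*} [Fintype n] (v w : EuclideanSpace ℂ n) :
    EuclideanSpace ℂ (n × n) :=
  WithLp.toLp 2 (fun p : n × n => v p.1 * w p.2)

/-- The symmetric subspace `Sym²(ℂ^n) ⊆ ℂ^n ⊗ ℂ^n`: the vectors fixed by the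
swap `v ⊗ w ↦ w ⊗ v`. -/
noncomputable def symSub (n : Type*) [Fintype n] :
    Submodule ℂ (EuclideanSpace ℂ (n × n)) where
  carrier := {T | ∀ i j : n, T (i, j) = T (j, i)}
  add_mem' := by
    intro T S hT hS i j
    simp only [PiLp.add_apply, hT i j, hS i j]
  zero_mem' := by intro _ _; rfl
  smul_mem' := by
    intro c T hT i j
    simp only [PiLp.smul_apply, hT i j]

/-- The bosonic product state `v ⊗ v` as an element of the symmetric subspace. -/
noncomputable def tpSym {n : Type*} [Fintype n] (v : EuclideanSpace ℂ n) :
    symSub n :=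
  ⟨tp v v, fun _ _ => by simp [tp, mul_comm]⟩

/-- Let `S` be a subspace of `Sym²(ℂ^d)` such that (1) the orthogonal projection
onto `S` kills no bosonic product state `v ⊗ v` (with `v ≠ 0`), and (2) no
nonzero element of `S` is of the form `x ⊗ x + y ⊗ y` (i.e., every nonzero
element of `S` has rank at least 3). Then the Householder reflection
`U = I - 2 P_S` is a bosonic universal entangler. -/
theorem householder_is_bosonic_universal_entangler (d : ℕ) (hd : 1 ≤ d)
    (S : Submodule ℂ (symSub (Fin d)))
    (h1 : ∀ v : EuclideanSpace ℂ (Fin d), v ≠ 0 →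
      S.orthogonalProjection (tpSym v) ≠ 0)
    (h2 : ∀ ψ : symSub (Fin d), ψ ∈ S →
      ∀ x y : EuclideanSpace ℂ (Fin d),
        (ψ : EuclideanSpace ℂ (Fin d × Fin d)) = tp x x + tp y y → ψ = 0) :
    ∀ v : EuclideanSpace ℂ (Fin d), v ≠ 0 →
      ∀ w : EuclideanSpace ℂ (Fin d),
        (ContinuousLinearMap.id ℂ (symSub (Fin d))
            - 2 • (S.subtypeL ∘L S.orthogonalProjection)) (tpSym v) ≠ tpSym w := by
  intro v hv w hEq
  set e : symSub (Fin d) := (S.orthogonalProjection (tpSym v) : symSub (Fin d)) with he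
  have heS : e ∈ S := (S.orthogonalProjection (tpSym v)).2
  have hkey : (2 : ℂ) • e = tpSym v - tpSym w := by
    have h0 : tpSym v - 2 • e = tpSym w := by
      simpa [ContinuousLinearMap.sub_apply, ContinuousLinearMap.smul_apply,
        ContinuousLinearMap.comp_apply, he] using hEq
    have h2e : (2 : ℂ) • e = (2 : ℕ) • e := by
      rw [two_smul, two_nsmul]
    rw [h2e, ← h0]
    abel
  have hmem : (2 : ℂ) • e ∈ S := S.smul_mem _ heS
  have hcoe : (((2 : ℂ) • e : symSub (Fin d)) : EuclideanSpace ℂ (Fin d × Fin d))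
      = tp v v + tp (Complex.I • w) (Complex.I • w) := by
    have hI : tp (Complex.I • w) (Complex.I • w) = -(tp w w) := by
      ext p
      show (Complex.I * w p.1) * (Complex.I * w p.2) = -(w p.1 * w p.2)
      rw [mul_mul_mul_comm, Complex.I_mul_I]
      ring
    rw [hI, hkey]
    rw [Submodule.coe_sub, sub_eq_add_neg]
    rfl
  have hzero : (2 : ℂ) • e = 0 := h2 _ hmem v (Complex.I • w) hcoe
  have hez : e = 0 := by
    rcases smul_eq_zero.mp hzero with h | h
    · exact absurd h two_ne_zero
    · exact h
  exact h1 v hv (Subtype.ext (by rw [← he, hez]; rfl))
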